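/- Let G be a finite simple graph and M a maximum matching of G. Let B_1,…,B_m be pairwise disjoint subsets of V(G) such that each B_i contains both endpoints of exactly one edge of M and the induced subgraph G[B_i] contains no path of order at least 4. Let G1 be the set of all edges {u,v} of G such that u ∈ B_i and v ∉ B_i for some i. Among all path-cycle covers of the graph (V(G), G1), let C be one that saturates the maximum possible number of the sets B_1,…,B_m, and let ℓ be the number of sets B_i not saturated by C. Then 2(|M| − ℓ) ≥ (4/5)·opt(G). -/

import Mathlib

open SimpleGraph

/-- Degree of a vertex in a subgraph, via `Set.ncard` of the neighbor set. -/
noncomputable def subDeg {V : Type*} {G : SimpleGraph V} (H : G.Subgraph) (v : V) : ℕ :=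
  (H.neighborSet v).ncard

/-- A subgraph is a path: it is a single vertex, or it is connected with exactly two
vertices of degree 1 and all other vertices of degree 2. -/
def IsPathSubgraph {V : Type*} {G : SimpleGraph V} (P : G.Subgraph) : Prop :=
  P.Connected ∧
  ((∃ v, P.verts = {v}) ∨
    (({v ∈ P.verts | subDeg P v = 1}).ncard = 2 ∧
      ∀ v ∈ P.verts, subDeg P v = 1 ∨ subDeg P v = 2))

/-- `x` is an endpoint of the path subgraph `P` (for paths of order at least 2). -/
def IsPathEndpoint {V : Type*} {G : SimpleGraph V} (P : G.Subgraph) (x : V) : Prop :=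
  x ∈ P.verts ∧ subDeg P x = 1

/-- A matching of `G`: a finite set of edges of `G`, no two of which share an endpoint. -/
def IsMatchingSet {V : Type*} (G : SimpleGraph V) (M : Finset (Sym2 V)) : Prop :=
  ↑M ⊆ G.edgeSet ∧ ∀ e ∈ M, ∀ f ∈ M, e ≠ f → ∀ v : V, v ∈ e → v ∉ f

/-- A maximum matching of `G`. -/
def IsMaxMatchingSet {V : Type*} (G : SimpleGraph V) (M : Finset (Sym2 V)) : Prop :=
  IsMatchingSet G M ∧ ∀ M' : Finset (Sym2 V), IsMatchingSet G M' → M'.card ≤ M.card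

/-- There is a collection of vertex-disjoint path subgraphs of `G`, each of order at
least 4, whose total number of vertices `n` satisfies `p n`. -/
def HasDisjointPathsCovering {V : Type*} (G : SimpleGraph V) (p : ℕ → Prop) : Prop :=
  ∃ Ps : Set G.Subgraph,
    (∀ P ∈ Ps, IsPathSubgraph P ∧ 4 ≤ P.verts.ncard) ∧
    (Ps.Pairwise fun P Q => Disjoint P.verts Q.verts) ∧
    p ((⋃ P ∈ Ps, P.verts).ncard)

/-- There is a collection of vertex-disjoint path subgraphs of `G`, each of order at
least 4, covering at least `N` vertices in total. -/
def HasDisjointPathCover {V : Type*} (G : SimpleGraph V) (N : ℕ) : Prop :=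
  HasDisjointPathsCovering G fun n => N ≤ n

/-- `opt G`: the maximum total number of vertices in a collection of vertex-disjoint
paths of `G`, each of order at least 4. -/
noncomputable def optValue {V : Type*} (G : SimpleGraph V) : ℕ :=
  sSup {n : ℕ |
    ∃ Ps : Set G.Subgraph,
      (∀ P ∈ Ps, IsPathSubgraph P ∧ 4 ≤ P.verts.ncard) ∧
      (Ps.Pairwise fun P Q => Disjoint P.verts Q.verts) ∧
      n = (⋃ P ∈ Ps, P.verts).ncard}

/-- Degree of a vertex in the spanning subgraph determined by an edge set `F`. -/
noncomputable def edgeDeg {W : Type*} (F : Set (Sym2 W)) (v : W) : ℕ :=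
  {e ∈ F | v ∈ e}.ncard

/-- An edge set `C` saturates a vertex set `B` if some edge of `C` has an endpoint in `B`. -/
def Saturates {W : Type*} (C : Set (Sym2 W)) (B : Set W) : Prop :=
  ∃ e ∈ C, ∃ v ∈ B, v ∈ e

/-!
Take an optimal family of vertex-disjoint paths of order at least 4. The edges of `G1` on these
paths form a path-cycle cover, so by the maximality of `C` at least `ℓ` blocks `B i` are not
saturated by it. Such a block meets none of the paths: a path meeting `B i` is not contained in
it, so it leaves `B i` along an edge of `G1`. A path of order `k` has a matching with
`⌈(k - 1) / 2⌉ ≥ 2k / 5` edges, and these matchings together with the `M`-edges inside the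
unsaturated blocks form a matching of `G`, which has at most `|M|` edges.
-/

namespace SimpleGraph.Subgraph

variable {V : Type*} {G : SimpleGraph V}

theorem Preconnected.deleteVerts_singleton {P : G.Subgraph} (hP : P.Preconnected) {x : V}
    (hx : (P.neighborSet x).Subsingleton) : (P.deleteVerts {x}).Preconnected := by
  have hind : (P.coe.induce {v | v.1 ≠ x}).Preconnected := by
    refine hP.coe.induce_of_degree_eq_one fun v hv => ?_
    simp only [Set.mem_ofPred_eq, not_not] at hv
    intro a ha b hb
    exact Subtype.ext (hx (hv ▸ ha : P.Adj x a) (hv ▸ hb : P.Adj x b))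
  let f : P.coe.induce {v | v.1 ≠ x} →g (P.deleteVerts {x}).coe :=
    ⟨fun v => ⟨v.1.1, v.1.2, v.2⟩, fun {a b} h => ⟨⟨a.1.2, a.2⟩, ⟨b.1.2, b.2⟩, h⟩⟩
  refine ⟨fun ⟨u, hu⟩ ⟨v, hv⟩ => ?_⟩
  rw [deleteVerts_verts] at hu hv
  exact (hind ⟨⟨u, hu.1⟩, hu.2⟩ ⟨⟨v, hv.1⟩, hv.2⟩).map f

theorem Preconnected.exists_adj {P : G.Subgraph} (hP : P.Preconnected) {u w : V}
    (hu : u ∈ P.verts) (hw : w ∈ P.verts) (hne : u ≠ w) : ∃ y, P.Adj u y := by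
  obtain ⟨p⟩ := hP.coe ⟨u, hu⟩ ⟨w, hw⟩
  obtain ⟨c, h, -⟩ := p.exists_eq_cons_of_ne (by simpa [Subtype.ext_iff] using hne)
  exact ⟨c, h⟩

theorem Preconnected.exists_adj_mem_notMem {P : G.Subgraph} (hP : P.Preconnected) {S : Set V}
    {u w : V} (hu : u ∈ P.verts) (hw : w ∈ P.verts) (huS : u ∈ S) (hwS : w ∉ S) :
    ∃ a b, P.Adj a b ∧ a ∈ S ∧ b ∉ S := by
  obtain ⟨p⟩ := hP.coe ⟨u, hu⟩ ⟨w, hw⟩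
  obtain ⟨d, -, hd, hd'⟩ := p.exists_boundary_dart {v | v.1 ∈ S} huS hwS
  exact ⟨_, _, d.adj, hd, hd'⟩

theorem edgeDeg_edgeSet (P : G.Subgraph) (v : V) : edgeDeg P.edgeSet v = subDeg P v := by
  classical
  rw [edgeDeg, subDeg, ← edgeSet_spanningCoe]
  exact Set.ncard_congr' (P.spanningCoe.incidenceSetEquivNeighborSet v)

end SimpleGraph.Subgraph

section IsMatchingSet

variable {V : Type*} {G H : SimpleGraph V} {S : Finset (Sym2 V)}

theorem isMatchingSet_empty : IsMatchingSet G ∅ := by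
  simp [IsMatchingSet]

theorem IsMatchingSet.mono (hS : IsMatchingSet G S) (hGH : G ≤ H) : IsMatchingSet H S :=
  ⟨hS.1.trans (edgeSet_mono hGH), hS.2⟩

theorem IsMatchingSet.mem_verts {P : G.Subgraph} (hS : IsMatchingSet P.spanningCoe S)
    {e : Sym2 V} (he : e ∈ S) {v : V} (hv : v ∈ e) : v ∈ P.verts :=
  Subgraph.mem_verts_of_mem_edge (P.edgeSet_spanningCoe ▸ hS.1 he) hv

theorem IsMatchingSet.insert [DecidableEq V] (hS : IsMatchingSet G S) {x y : V} (hxy : G.Adj x y)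
    (hx : ∀ e ∈ S, x ∉ e) (hy : ∀ e ∈ S, y ∉ e) : IsMatchingSet G (insert s(x, y) S) := by
  refine ⟨?_, ?_⟩
  · rw [Finset.coe_insert, Set.insert_subset_iff]
    exact ⟨hxy, hS.1⟩
  · have hxy_new : ∀ f ∈ S, ∀ v ∈ s(x, y), v ∉ f := by
      rintro f hf v hv
      rcases Sym2.mem_iff.1 hv with rfl | rfl
      exacts [hx f hf, hy f hf]
    simp only [Finset.mem_insert]
    rintro e (rfl | he) f (rfl | hf) hef v hve hvf
    · exact hef rfl
    · exact hxy_new f hf v hve hvf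
    · exact hxy_new e he v hvf hve
    · exact hS.2 e he f hf hef v hve hvf

theorem IsMatchingSet.biUnion [DecidableEq V] {ι : Type*} {s : Finset ι} {T : ι → Finset (Sym2 V)}
    {X : ι → Set V} (hT : ∀ i ∈ s, IsMatchingSet G (T i)) (hTX : ∀ i ∈ s, ∀ e ∈ T i, ∀ v ∈ e, v ∈ X i)
    (hX : (s : Set ι).PairwiseDisjoint X) :
    IsMatchingSet G (s.biUnion T) ∧ (s.biUnion T).card = ∑ i ∈ s, (T i).card := by
  have hTdisj : (s : Set ι).PairwiseDisjoint T := fun i hi j hj hij =>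
    Finset.disjoint_left.2 fun e hei hej =>
      Set.disjoint_left.1 (hX hi hj hij) (hTX i hi e hei _ e.out_fst_mem)
        (hTX j hj e hej _ e.out_fst_mem)
  refine ⟨⟨fun e he => ?_, fun e he f hf hef v hve hvf => ?_⟩, Finset.card_biUnion hTdisj⟩
  · obtain ⟨i, hi, hei⟩ := Finset.mem_biUnion.1 he
    exact (hT i hi).1 hei
  · obtain ⟨i, hi, hei⟩ := Finset.mem_biUnion.1 he
    obtain ⟨j, hj, hfj⟩ := Finset.mem_biUnion.1 hf
    by_cases hij : i = j
    · subst hij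
      exact (hT i hi).2 e hei f hfj hef v hve hvf
    · exact Set.disjoint_left.1 (hX hi hj hij) (hTX i hi e hei v hve) (hTX j hj f hfj v hvf)

end IsMatchingSet

section Paths

variable {V : Type*} {G : SimpleGraph V}

/-- The second alternative keeps the leaf `x` unmatched, so that in the induction, which
removes the leaf, the leaf edge can be added to the matching of the rest. -/
theorem SimpleGraph.Subgraph.Connected.exists_isMatchingSet_of_leaf [Finite V] {P : G.Subgraph}
    (hP : P.Connected) (hdeg : ∀ v ∈ P.verts, subDeg P v ≤ 2) {x : V} (hx : x ∈ P.verts)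
    (hleaf : (P.neighborSet x).Subsingleton) :
    ∃ S, IsMatchingSet P.spanningCoe S ∧
      (P.verts.ncard ≤ 2 * S.card ∨ P.verts.ncard ≤ 2 * S.card + 1 ∧ ∀ e ∈ S, x ∉ e) := by
  classical
  obtain ⟨n, hn⟩ : ∃ n, P.verts.ncard = n := ⟨_, rfl⟩
  induction n generalizing P x with
  | zero => exact ⟨∅, isMatchingSet_empty, by omega⟩
  | succ n ih =>
    by_cases hnbr : ∃ y, P.Adj x y
    swap
    · have hverts : P.verts = {x} := by
        refine Set.eq_singleton_iff_unique_mem.2 ⟨hx, fun w hw => ?_⟩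
        by_contra hwx
        exact hnbr (hP.preconnected.exists_adj hx hw (Ne.symm hwx))
      refine ⟨∅, isMatchingSet_empty, Or.inr ⟨?_, by simp⟩⟩
      simp [hverts]
    obtain ⟨y, hxy⟩ := hnbr
    set P' := P.deleteVerts {x}
    have hyx : y ≠ x := (P.adj_sub hxy).ne.symm
    have hy' : y ∈ P'.verts := ⟨P.edge_vert hxy.symm, hyx⟩
    have hn' : P'.verts.ncard = n := by
      rw [Subgraph.deleteVerts_verts, Set.ncard_sdiff_singleton_of_mem hx, hn, Nat.add_sub_cancel]
    have hP' : P'.Connected :=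
      Subgraph.connected_iff.2 ⟨hP.preconnected.deleteVerts_singleton hleaf, y, hy'⟩
    have hnbr_le (v : V) : P'.neighborSet v ⊆ P.neighborSet v :=
      Subgraph.neighborSet_subset_of_subgraph Subgraph.deleteVerts_le v
    have hdeg' : ∀ v ∈ P'.verts, subDeg P' v ≤ 2 := fun v hv =>
      (Set.ncard_le_ncard (hnbr_le v)).trans (hdeg v hv.1)
    have hleaf' : (P'.neighborSet y).Subsingleton := by
      have hsub : P'.neighborSet y ⊆ P.neighborSet y \ {x} := fun w hw =>
        ⟨hnbr_le y hw, (Subgraph.deleteVerts_adj.1 hw).2.2.2.1⟩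
      rw [← Set.ncard_le_one_iff_subsingleton]
      calc (P'.neighborSet y).ncard ≤ (P.neighborSet y \ {x}).ncard := Set.ncard_le_ncard hsub
        _ = subDeg P y - 1 := Set.ncard_sdiff_singleton_of_mem hxy.symm
        _ ≤ 1 := by have := hdeg y hy'.1; omega
    obtain ⟨S, hS, hcard⟩ := ih hP' hdeg' hy' hleaf' hn'
    have hxS : ∀ e ∈ S, x ∉ e := fun e he hxe => (hS.mem_verts he hxe).2 rfl
    have hSP : IsMatchingSet P.spanningCoe S :=
      hS.mono (Subgraph.spanningCoe_le_of_le Subgraph.deleteVerts_le)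
    rcases hcard with hcard | ⟨hcard, hyS⟩
    · exact ⟨S, hSP, Or.inr ⟨by omega, hxS⟩⟩
    · refine ⟨insert s(x, y) S, hSP.insert hxy hxS hyS, Or.inl ?_⟩
      rw [Finset.card_insert_of_notMem fun h => hxS _ h (Sym2.mem_mk_left x y)]
      omega

theorem IsPathSubgraph.subDeg_le_two [Finite V] {P : G.Subgraph} (hP : IsPathSubgraph P) :
    ∀ v ∈ P.verts, subDeg P v ≤ 2 := by
  rcases hP.2 with ⟨w, hw⟩ | ⟨-, hdeg⟩
  · intro v _
    exact (Set.ncard_le_ncard (P.neighborSet_subset_verts v)).trans (by simp [hw])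
  · intro v hv
    rcases hdeg v hv with h | h <;> omega

theorem IsPathSubgraph.exists_isMatchingSet [Finite V] {P : G.Subgraph} (hP : IsPathSubgraph P) :
    ∃ S, IsMatchingSet P.spanningCoe S ∧ P.verts.ncard ≤ 2 * S.card + 1 := by
  obtain ⟨hconn, ⟨v, hv⟩ | ⟨hends, hdeg⟩⟩ := hP
  · exact ⟨∅, isMatchingSet_empty, by simp [hv]⟩
  · obtain ⟨x, hx, hx1⟩ := Set.nonempty_of_ncard_ne_zero (hends ▸ two_ne_zero)
    obtain ⟨S, hS, hcard⟩ := hconn.exists_isMatchingSet_of_leaf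
      (IsPathSubgraph.subDeg_le_two ⟨hconn, Or.inr ⟨hends, hdeg⟩⟩) hx
      (Set.ncard_le_one_iff_subsingleton.1 hx1.le)
    exact ⟨S, hS, by omega⟩

theorem exists_finset_paths_ncard_eq_optValue [Finite V] (G : SimpleGraph V) :
    ∃ Ps : Finset G.Subgraph, (∀ P ∈ Ps, IsPathSubgraph P ∧ 4 ≤ P.verts.ncard) ∧
      (Ps : Set G.Subgraph).Pairwise (fun P Q => Disjoint P.verts Q.verts) ∧
      optValue G = (⋃ P ∈ Ps, P.verts).ncard := by
  obtain ⟨Ps, hPs, hdisj, hopt⟩ : optValue G ∈ _ := Nat.sSup_mem ⟨0, ∅, by simp, by simp, by simp⟩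
    ⟨Nat.card V, by rintro n ⟨Ps, -, -, rfl⟩; exact Set.ncard_le_card _⟩
  exact ⟨Ps.toFinite.toFinset, by simpa using hPs, by simpa using hdisj, by simpa using hopt⟩

theorem four_mul_ncard_biUnion_le [Finite V] {M : Finset (Sym2 V)}
    (hM : IsMaxMatchingSet G M) {Ps : Finset G.Subgraph}
    (hPs : ∀ P ∈ Ps, IsPathSubgraph P ∧ 4 ≤ P.verts.ncard)
    (hdisj : (Ps : Set G.Subgraph).Pairwise fun P Q => Disjoint P.verts Q.verts)
    {ι : Type*} {U : Finset ι} {B : ι → Set V} (hB : (U : Set ι).PairwiseDisjoint B)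
    (hBM : ∀ i, ∃ e ∈ M, ∀ v ∈ e, v ∈ B i) (hPB : ∀ P ∈ Ps, ∀ i ∈ U, Disjoint P.verts (B i)) :
    4 * (⋃ P ∈ Ps, P.verts).ncard ≤ 10 * (M.card - U.card) := by
  classical
  choose! T hT hTcard using fun P (hP : P ∈ Ps) => (hPs P hP).1.exists_isMatchingSet
  choose e he heB using hBM
  let T' : G.Subgraph ⊕ ι → Finset (Sym2 V) := Sum.elim T fun i => {e i}
  let X : G.Subgraph ⊕ ι → Set V := Sum.elim Subgraph.verts B
  have hT'match : ∀ a ∈ Ps.disjSum U, IsMatchingSet G (T' a) := by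
    rintro (P | i) hi
    · exact (hT P (Finset.inl_mem_disjSum.1 hi)).mono P.spanningCoe_le
    · exact ⟨by simpa [T'] using hM.1.1 (he i), by simp [T']⟩
  have hT'X : ∀ a ∈ Ps.disjSum U, ∀ f ∈ T' a, ∀ v ∈ f, v ∈ X a := by
    rintro (P | i) hi f hf v hv
    · exact (hT P (Finset.inl_mem_disjSum.1 hi)).mem_verts hf hv
    · rw [Finset.mem_singleton.1 hf] at hv
      exact heB i v hv
  have hXdisj : (Ps.disjSum U : Set (G.Subgraph ⊕ ι)).PairwiseDisjoint X := by
    rintro (P | i) hi (Q | j) hj hne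
    · exact hdisj (Finset.inl_mem_disjSum.1 hi) (Finset.inl_mem_disjSum.1 hj) (by simpa using hne)
    · exact hPB P (Finset.inl_mem_disjSum.1 hi) j (Finset.inr_mem_disjSum.1 hj)
    · exact (hPB Q (Finset.inl_mem_disjSum.1 hj) i (Finset.inr_mem_disjSum.1 hi)).symm
    · exact hB (Finset.inr_mem_disjSum.1 hi) (Finset.inr_mem_disjSum.1 hj) (by simpa using hne)
  obtain ⟨hmatch, hcard⟩ := IsMatchingSet.biUnion hT'match hT'X hXdisj
  have hM' := hM.2 _ hmatch
  rw [hcard, Finset.sum_disjSum] at hM'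
  simp only [T', Sum.elim_inl, Sum.elim_inr, Finset.card_singleton, Finset.sum_const,
    smul_eq_mul, mul_one] at hM'
  have hsum : ∑ P ∈ Ps, 4 * P.verts.ncard ≤ ∑ P ∈ Ps, 10 * (T P).card :=
    Finset.sum_le_sum fun P hP => by have := hTcard P hP; have := (hPs P hP).2; omega
  rw [← Finset.mul_sum, ← Finset.mul_sum] at hsum
  have := Finset.set_ncard_biUnion_le Ps Subgraph.verts
  omega

end Paths

section Covers

variable {V : Type*} {G : SimpleGraph V}

theorem edgeDeg_mono [Finite V] {F F' : Set (Sym2 V)} (h : F ⊆ F') (v : V) :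
    edgeDeg F v ≤ edgeDeg F' v :=
  Set.ncard_le_ncard fun _ he => ⟨h he.1, he.2⟩

theorem edgeDeg_biUnion_edgeSet_le [Finite V] {Ps : Set G.Subgraph}
    (hdisj : Ps.Pairwise fun P Q => Disjoint P.verts Q.verts) {k : ℕ}
    (hdeg : ∀ P ∈ Ps, ∀ v ∈ P.verts, subDeg P v ≤ k) (v : V) :
    edgeDeg (⋃ P ∈ Ps, P.edgeSet) v ≤ k := by
  by_cases hv : ∃ P ∈ Ps, v ∈ P.verts
  · obtain ⟨P, hP, hvP⟩ := hv
    have hsub : {e ∈ ⋃ Q ∈ Ps, Q.edgeSet | v ∈ e} ⊆ {e ∈ P.edgeSet | v ∈ e} := by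
      rintro e ⟨he, hve⟩
      obtain ⟨Q, hQ, heQ⟩ := Set.mem_iUnion₂.1 he
      obtain rfl : Q = P := hdisj.eq hQ hP
        (Set.not_disjoint_iff.2 ⟨v, Subgraph.mem_verts_of_mem_edge heQ hve, hvP⟩)
      exact ⟨heQ, hve⟩
    calc edgeDeg (⋃ Q ∈ Ps, Q.edgeSet) v ≤ edgeDeg P.edgeSet v := Set.ncard_le_ncard hsub
      _ = subDeg P v := P.edgeDeg_edgeSet v
      _ ≤ k := hdeg P hP v hvP
  · push Not at hv
    have hempty : {e ∈ ⋃ Q ∈ Ps, Q.edgeSet | v ∈ e} = ∅ := by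
      refine Set.eq_empty_of_forall_notMem fun e ⟨he, hve⟩ => ?_
      obtain ⟨Q, hQ, heQ⟩ := Set.mem_iUnion₂.1 he
      exact hv Q hQ (Subgraph.mem_verts_of_mem_edge heQ hve)
    rw [edgeDeg, hempty, Set.ncard_empty]
    exact Nat.zero_le k

theorem Saturates.of_preconnected {P : G.Subgraph} (hP : P.Preconnected) {B : Set V}
    {C : Set (Sym2 V)} (hC : ∀ u w, P.Adj u w → u ∈ B → w ∉ B → s(u, w) ∈ C)
    (hnsub : ¬ P.verts ⊆ B) (hmeet : ¬ Disjoint P.verts B) : Saturates C B := by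
  obtain ⟨v, hv, hvB⟩ := Set.not_disjoint_iff.1 hmeet
  obtain ⟨w, hw, hwB⟩ := Set.not_subset.1 hnsub
  obtain ⟨a, b, hab, ha, hb⟩ := hP.exists_adj_mem_notMem hv hw hvB hwB
  exact ⟨_, hC a b hab ha hb, a, ha, Sym2.mem_mk_left a b⟩

end Covers

theorem Set.ncard_compl_le_ncard_compl {α : Type*} [Finite α] {s t : Set α}
    (h : s.ncard ≤ t.ncard) : tᶜ.ncard ≤ sᶜ.ncard := by
  rw [Set.ncard_compl s, Set.ncard_compl t]
  omega

theorem stmt4_general {V : Type*} [Fintype V] (G : SimpleGraph V)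
    (M : Finset (Sym2 V)) (hM : IsMaxMatchingSet G M)
    (m : ℕ) (B : Fin m → Set V)
    (hBdisj : ∀ i j : Fin m, i ≠ j → Disjoint (B i) (B j))
    (hBedge : ∀ i : Fin m, ∃! e : Sym2 V, e ∈ M ∧ ∀ v ∈ e, v ∈ B i)
    (hBnopath : ∀ i : Fin m, ∀ P : G.Subgraph,
      IsPathSubgraph P → P.verts ⊆ B i → P.verts.ncard < 4)
    (G1 : Set (Sym2 V))
    (hG1 : G1 = {e | e ∈ G.edgeSet ∧
      ∃ (i : Fin m) (u v : V), e = s(u, v) ∧ u ∈ B i ∧ v ∉ B i})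
    (C : Set (Sym2 V))
    (hCmax : ∀ C' : Set (Sym2 V), C' ⊆ G1 → (∀ v, edgeDeg C' v ≤ 2) →
      ({i : Fin m | Saturates C' (B i)}).ncard ≤ ({i : Fin m | Saturates C (B i)}).ncard)
    (ℓ : ℕ) (hℓ : ℓ = ({i : Fin m | ¬ Saturates C (B i)}).ncard) :
    4 * optValue G ≤ 5 * (2 * (M.card - ℓ)) := by
  classical
  obtain ⟨Ps, hPs, hdisj, hopt⟩ := exists_finset_paths_ncard_eq_optValue G
  set C' : Set (Sym2 V) := G1 ∩ ⋃ P ∈ (Ps : Set G.Subgraph), P.edgeSet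
  have hC'deg (v : V) : edgeDeg C' v ≤ 2 :=
    (edgeDeg_mono Set.inter_subset_right v).trans <| edgeDeg_biUnion_edgeSet_le hdisj
      (fun P hP => (hPs P hP).1.subDeg_le_two) v
  set U := Finset.univ.filter fun i => ¬ Saturates C' (B i)
  have hℓU : ℓ ≤ U.card := by
    have := Set.ncard_compl_le_ncard_compl (hCmax C' Set.inter_subset_left hC'deg)
    simpa [hℓ, U, Set.compl_ofPred, ← Set.ncard_coe_finset] using this
  have hPB : ∀ P ∈ Ps, ∀ i ∈ U, Disjoint P.verts (B i) := by
    intro P hP i hi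
    have hcross : ∀ u w, P.Adj u w → u ∈ B i → w ∉ B i → s(u, w) ∈ C' := fun u w huw hu hw =>
      ⟨hG1 ▸ ⟨P.adj_sub huw, i, u, w, rfl, hu, hw⟩, Set.mem_biUnion (Finset.mem_coe.2 hP) huw⟩
    have hnsub : ¬ P.verts ⊆ B i := fun hsub =>
      (hBnopath i P (hPs P hP).1 hsub).not_ge (hPs P hP).2
    by_contra hmeet
    exact (Finset.mem_filter.1 hi).2
      (Saturates.of_preconnected (hPs P hP).1.1.preconnected hcross hnsub hmeet)
  have := four_mul_ncard_biUnion_le hM hPs hdisj (U := U)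
    (fun i _ j _ hij => hBdisj i j hij) (fun i => (hBedge i).exists) hPB
  rw [hopt]
  omega

/-- with `M` a maximum matching, `B i` pairwise disjoint sets each
containing both endpoints of exactly one edge of `M` and inducing no path of order at
least 4, `G1` the set of edges of `G` leaving some `B i`, `C` a path-cycle cover of
`(V, G1)` saturating the maximum possible number of the `B i`, and `ℓ` the number of
unsaturated `B i`, we have `2(|M| − ℓ) ≥ (4/5)·opt(G)`. -/
theorem stmt4 {V : Type*} [Fintype V] [DecidableEq V] (G : SimpleGraph V)
    (M : Finset (Sym2 V)) (hM : IsMaxMatchingSet G M)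
    (m : ℕ) (B : Fin m → Set V)
    (hBdisj : ∀ i j : Fin m, i ≠ j → Disjoint (B i) (B j))
    (hBedge : ∀ i : Fin m, ∃! e : Sym2 V, e ∈ M ∧ ∀ v ∈ e, v ∈ B i)
    (hBnopath : ∀ i : Fin m, ∀ P : G.Subgraph,
      IsPathSubgraph P → P.verts ⊆ B i → P.verts.ncard < 4)
    (G1 : Set (Sym2 V))
    (hG1 : G1 = {e | e ∈ G.edgeSet ∧
      ∃ (i : Fin m) (u v : V), e = s(u, v) ∧ u ∈ B i ∧ v ∉ B i})
    (C : Set (Sym2 V)) (hCsub : C ⊆ G1) (hCdeg : ∀ v, edgeDeg C v ≤ 2)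
    (hCmax : ∀ C' : Set (Sym2 V), C' ⊆ G1 → (∀ v, edgeDeg C' v ≤ 2) →
      ({i : Fin m | Saturates C' (B i)}).ncard ≤ ({i : Fin m | Saturates C (B i)}).ncard)
    (ℓ : ℕ) (hℓ : ℓ = ({i : Fin m | ¬ Saturates C (B i)}).ncard) :
    4 * optValue G ≤ 5 * (2 * (M.card - ℓ)) :=
  stmt4_general G M hM m B hBdisj hBedge hBnopath G1 hG1 C hCmax ℓ hℓ
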